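/- arXiv:1106.6336 — 5 statements merged into one kernel-verified Lean document; each statement's English description precedes it below -/
import Mathlib

section
/- Let G be a d-degenerate graph on n vertices and ε > 0. The iterative procedure that repeatedly removes ⌈nε/(2+ε)⌉ vertices of smallest degree from the current graph (where n is the current number of vertices) and appends them to a list L produces an ordering of the vertices of G such that every vertex has at most (2+ε)d neighbors appearing later in L; that is, L is a (2+ε)d-degeneracy ordering of G. -/
/-- A graph `G` is `d`-degenerate if every nonempty (induced) subgraph of `G`
contains a vertex of degree at most `d`. -/
def Degenerate {V : Type*} [Fintype V] [DecidableEq V] (G : SimpleGraph V)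
    [DecidableRel G.Adj] (d : ℕ) : Prop :=
  ∀ s : Finset V, s.Nonempty → ∃ v ∈ s, (s.filter (fun w => G.Adj v w)).card ≤ d

/-!
Peeling off a vertex of degree at most `d` shows that a `d`-degenerate graph induces at most
`d n` edges on any `n` vertices, so degrees in the current vertex set `s` sum to at most `2dn`.
A vertex `v` removed from `s` in a block of size `k` has degree no larger than each of the
`n - k` survivors, whence `(n - k + 1) deg v ≤ 2dn`. As `k < nε/(2+ε) + 1`, we have
`n - k + 1 > 2n/(2+ε)`, so `deg v ≤ (2+ε)d`. All neighbours of `v` removed no earlier than `v`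
still lie in `s`.
-/

open Finset

theorem Finset.card_sdiff_add_one_mul_le_sum {α : Type*} [DecidableEq α] {s S : Finset α}
    {v : α} {f : α → ℕ} (hSs : S ⊆ s) (hv : v ∈ S) (hf : ∀ u ∈ s \ S, f v ≤ f u) :
    (#(s \ S) + 1) * f v ≤ ∑ u ∈ s, f u := by
  have hvT : v ∉ s \ S := by simp [hv]
  calc (#(s \ S) + 1) * f v = #(insert v (s \ S)) • f v := by
        rw [card_insert_of_notMem hvT, smul_eq_mul]
    _ ≤ ∑ u ∈ insert v (s \ S), f u := by
        refine card_nsmul_le_sum _ _ _ fun u hu => ?_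
        obtain rfl | hu := mem_insert.mp hu
        exacts [le_rfl, hf u hu]
    _ ≤ ∑ u ∈ s, f u :=
        sum_le_sum_of_subset (insert_subset (hSs hv) sdiff_subset)

theorem two_mul_add_le_of_le_ceil {ε : ℝ} (hε : 0 ≤ ε) {m k : ℕ}
    (hk : k ≤ ⌈((m + k : ℕ) : ℝ) * ε / (2 + ε)⌉₊) :
    2 * ((m : ℝ) + k) ≤ (2 + ε) * (m + 1) := by
  have hpos : (0 : ℝ) ≤ ((m + k : ℕ) : ℝ) * ε / (2 + ε) := by positivity
  have hkR : (k : ℝ) < ((m : ℝ) + k) * ε / (2 + ε) + 1 := by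
    exact_mod_cast (Nat.cast_le.mpr hk).trans_lt (Nat.ceil_lt_add_one hpos)
  rw [div_add_one (by positivity), lt_div_iff₀ (by positivity)] at hkR
  nlinarith

namespace SimpleGraph

variable {V : Type*} [DecidableEq V] (G : SimpleGraph V) [DecidableRel G.Adj]

theorem sum_card_adj_eq_sum_erase_add {s : Finset V} {v : V} (hv : v ∈ s) :
    ∑ u ∈ s, #{w ∈ s | G.Adj u w} =
      ∑ u ∈ s.erase v, #{w ∈ s.erase v | G.Adj u w} + 2 * #{w ∈ s | G.Adj v w} := by
  have hdeg (u : V) : #{w ∈ s | G.Adj u w} =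
      (if G.Adj u v then 1 else 0) + #{w ∈ s.erase v | G.Adj u w} := by
    simp only [card_filter]
    exact (add_sum_erase s _ hv).symm
  have hback : #{u ∈ s.erase v | G.Adj u v} = #{w ∈ s | G.Adj v w} := by
    rw [filter_erase, erase_eq_of_notMem (by simp)]
    simp only [G.adj_comm]
  rw [← add_sum_erase s _ hv, sum_congr rfl fun u _ => hdeg u, sum_add_distrib,
    ← card_filter, hback]
  ring

theorem sum_card_adj_le_of_degenerate [Fintype V] {d : ℕ} (hG : Degenerate G d) (s : Finset V) :
    ∑ u ∈ s, #{w ∈ s | G.Adj u w} ≤ 2 * d * #s := by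
  induction s using Finset.strongInduction with
  | H s ih =>
    obtain rfl | hne := s.eq_empty_or_nonempty
    · simp
    obtain ⟨v, hv, hvd⟩ := hG s hne
    rw [G.sum_card_adj_eq_sum_erase_add hv, ← card_erase_add_one hv]
    have := ih _ (erase_ssubset hv)
    nlinarith

theorem card_adj_le_of_mem_smallest_of_card_eq_ceil [Fintype V] {d : ℕ} (hG : Degenerate G d)
    {ε : ℝ} (hε : 0 ≤ ε) {s S : Finset V} (hSs : S ⊆ s)
    (hcard : #S = ⌈(#s : ℝ) * ε / (2 + ε)⌉₊)
    (hsmall : ∀ v ∈ S, ∀ u ∈ s \ S, #{w ∈ s | G.Adj v w} ≤ #{w ∈ s | G.Adj u w})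
    {v : V} (hv : v ∈ S) :
    (#{w ∈ s | G.Adj v w} : ℝ) ≤ (2 + ε) * d := by
  set m := #(s \ S)
  have hs : #s = m + #S := (card_sdiff_add_card_eq_card hSs).symm
  have hdeg : (m + 1) * #{w ∈ s | G.Adj v w} ≤ 2 * d * (m + #S) :=
    hs ▸ (card_sdiff_add_one_mul_le_sum hSs hv (hsmall v hv)).trans
      (G.sum_card_adj_le_of_degenerate hG s)
  have hdegR : ((m : ℝ) + 1) * #{w ∈ s | G.Adj v w} ≤ 2 * d * (m + #S) := by
    exact_mod_cast hdeg
  have hsize := two_mul_add_le_of_le_ceil hε (m := m) (k := #S) (by rw [← hs]; exact hcard.le)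
  refine le_of_mul_le_mul_left ?_ (Nat.cast_add_one_pos m)
  nlinarith [(Nat.cast_nonneg d : (0 : ℝ) ≤ d)]

end SimpleGraph

/-- The procedure is encoded by the sequence `s i` of remaining vertex sets and the blocks
`S i` of removed vertices; `ord v` is the index of the block in which `v` is removed,
so `v` precedes `w` in `L` whenever `ord v < ord w`. -/
theorem approx_degeneracy_ordering_general {V : Type*} [Fintype V] [DecidableEq V]
    (G : SimpleGraph V) [DecidableRel G.Adj] (d : ℕ) (hG : Degenerate G d)
    (ε : ℝ) (hε : 0 < ε)
    (s S : ℕ → Finset V) (ord : V → ℕ)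
    (hstep : ∀ i, s (i + 1) = s i \ S i)
    (hSsub : ∀ i, S i ⊆ s i)
    (hScard : ∀ i, (S i).card = ⌈((s i).card : ℝ) * ε / (2 + ε)⌉₊)
    (hSmall : ∀ i, ∀ v ∈ S i, ∀ u ∈ s i \ S i,
      ((s i).filter (fun w => G.Adj v w)).card ≤ ((s i).filter (fun w => G.Adj u w)).card)
    (hord : ∀ v, v ∈ S (ord v)) :
    ∀ v : V,
      ((Finset.univ.filter (fun w => G.Adj v w ∧ ord v ≤ ord w)).card : ℝ)
        ≤ (2 + ε) * d := by
  intro v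
  have hanti : Antitone s := antitone_nat_of_succ_le fun i => (hstep i).trans_le sdiff_subset
  have hlater : #{w | G.Adj v w ∧ ord v ≤ ord w} ≤ #{w ∈ s (ord v) | G.Adj v w} :=
    card_le_card fun w hw => by
      simp only [mem_filter, mem_univ, true_and] at hw
      exact mem_filter.2 ⟨hanti hw.2 (hSsub _ (hord w)), hw.1⟩
  exact (Nat.cast_le.2 hlater).trans <| G.card_adj_le_of_mem_smallest_of_card_eq_ceil hG hε.le
    (hSsub _) (hScard _) (hSmall _) (hord v)

/-- The iterative procedure that repeatedly removes `⌈nε/(2+ε)⌉` vertices of smallest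
degree from the current graph (where `n` is the current number of vertices) and appends
them to a list produces a `(2+ε)d`-degeneracy ordering of `G`: every vertex has at most
`(2+ε)d` neighbors appearing at its own stage or later (in particular, at most `(2+ε)d`
neighbors later in the produced list `L`).

The procedure is encoded by the sequence `s i` of remaining vertex sets and the blocks
`S i` of removed vertices; `ord v` is the index of the block in which `v` is removed,
so `v` precedes `w` in `L` whenever `ord v < ord w`. -/
theorem approx_degeneracy_ordering {V : Type*} [Fintype V] [DecidableEq V]
    (G : SimpleGraph V) [DecidableRel G.Adj] (d : ℕ) (hG : Degenerate G d)
    (ε : ℝ) (hε : 0 < ε)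
    (s S : ℕ → Finset V) (ord : V → ℕ)
    (hs0 : s 0 = Finset.univ)
    (hstep : ∀ i, s (i + 1) = s i \ S i)
    (hSsub : ∀ i, S i ⊆ s i)
    (hScard : ∀ i, (S i).card = ⌈((s i).card : ℝ) * ε / (2 + ε)⌉₊)
    (hSmall : ∀ i, ∀ v ∈ S i, ∀ u ∈ s i \ S i,
      ((s i).filter (fun w => G.Adj v w)).card ≤ ((s i).filter (fun w => G.Adj u w)).card)
    (hord : ∀ v, v ∈ S (ord v)) :
    ∀ v : V,
      ((Finset.univ.filter (fun w => G.Adj v w ∧ ord v ≤ ord w)).card : ℝ)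
        ≤ (2 + ε) * d :=
  approx_degeneracy_ordering_general G d hG ε hε s S ord hstep hSsub hScard hSmall hord
end

section
/- For every collection F of p-element sets and every natural number q, there exists a q-representative subcollection F̂ ⊆ F of size at most C(p+q, p), i.e., for every q-element set B, if there exists A ∈ F with A ∩ B = ∅ then there exists Â ∈ F̂ with Â ∩ B = ∅. -/
/-!
Shrink `F` to an inclusion-minimal subfamily `F̂` that is still `q`-representative. Minimality
gives every `A ∈ F̂` a `q`-set `B_A` that is disjoint from `A` and meets every other member of
`F̂`, so the pairs `(A, B_A)` form a Bollobás set-pair system. Bollobás's inequality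
`∑ 1 / C(|Aᵢ| + |Bᵢ|, |Aᵢ|) ≤ 1` then bounds `|F̂|` by `C(p + q, p)`. It is proved by Lubell's
counting: in a uniformly random ordering of the ground set, "all of `Aᵢ` precedes all of `Bᵢ`"
has probability `1 / C(|Aᵢ| + |Bᵢ|, |Aᵢ|)`, and these events are pairwise disjoint.
-/

open Finset

theorem Finset.exists_perm_mapsTo_of_card_eq {β : Type*} {s s' t t' : Finset β}
    (hs : Disjoint s s') (ht : Disjoint t t') (h : #s = #t) (h' : #s' = #t') :
    ∃ π : Equiv.Perm β, Set.MapsTo π s t ∧ Set.MapsTo π s' t' := by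
  set e := equivOfCardEq h
  set e' := equivOfCardEq h'
  have hf : Function.Injective (Sum.elim (fun x : s => (x : β)) fun x : s' => (x : β)) :=
    Subtype.val_injective.sumElim Subtype.val_injective
      fun x y hxy => disjoint_left.1 hs x.2 (hxy ▸ y.2)
  have hg : Function.Injective (Sum.elim (fun x => (e x : β)) fun x => (e' x : β)) :=
    Function.Injective.sumElim (Subtype.val_injective.comp e.injective)
      (Subtype.val_injective.comp e'.injective)
      fun x y (hxy : (e x : β) = e' y) => disjoint_left.1 ht (e x).2 (hxy ▸ (e' y).2)
  obtain ⟨π, hπ⟩ := Equiv.Perm.exists_extending_pair _ _ hf hg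
  refine ⟨π, fun x hx => ?_, fun x hx => ?_⟩
  · exact hπ (.inl ⟨x, hx⟩) ▸ (e _).2
  · exact hπ (.inr ⟨x, hx⟩) ▸ (e' _).2

theorem Finset.exists_subset_card_eq_forall_lt {β γ : Type*} [DecidableEq β] [LinearOrder γ]
    {f : β → γ} (hf : Function.Injective f) (C : Finset β) {k : ℕ} (hk : k ≤ #C) :
    ∃ T ⊆ C, #T = k ∧ ∀ a ∈ T, ∀ b ∈ C \ T, f a < f b := by
  induction k with
  | zero => exact ⟨∅, empty_subset _, card_empty, by simp⟩
  | succ k ih =>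
    obtain ⟨T, hTC, hTk, hT⟩ := ih (by omega)
    have hrest : (C \ T).Nonempty := by
      rw [← card_pos, card_sdiff_of_subset hTC]; omega
    obtain ⟨m, hm, hmin⟩ := (C \ T).exists_min_image f hrest
    have hmT : m ∉ T := (mem_sdiff.1 hm).2
    refine ⟨insert m T, insert_subset (mem_sdiff.1 hm).1 hTC,
      by rw [card_insert_of_notMem hmT, hTk], fun a ha b hb => ?_⟩
    rw [sdiff_insert, mem_erase] at hb
    rcases mem_insert.1 ha with rfl | haT
    · exact (hmin b hb.2).lt_of_ne (hf.ne (Ne.symm hb.1))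
    · exact hT a haT b hb.2

section Orderings

variable {β : Type*} [Fintype β] [DecidableEq β]

def precedeOrders (A B : Finset β) : Finset (β ≃ Fin (Fintype.card β)) :=
  {σ | ∀ a ∈ A, ∀ b ∈ B, σ a < σ b}

theorem mem_precedeOrders {A B : Finset β} {σ : β ≃ Fin (Fintype.card β)} :
    σ ∈ precedeOrders A B ↔ ∀ a ∈ A, ∀ b ∈ B, σ a < σ b := by
  simp [precedeOrders]

theorem card_precedeOrders_le {A B A' B' : Finset β} (hAB : Disjoint A B) (hAB' : Disjoint A' B')
    (hA : #A' = #A) (hB : #B' = #B) : #(precedeOrders A B) ≤ #(precedeOrders A' B') := by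
  obtain ⟨π, hπA, hπB⟩ := Finset.exists_perm_mapsTo_of_card_eq hAB' hAB hA hB
  refine card_le_card_of_injOn (π.trans ·) (fun σ hσ => ?_) fun σ₁ _ σ₂ _ h => ?_
  · rw [mem_coe, mem_precedeOrders] at hσ ⊢
    exact fun a ha b hb => hσ _ (hπA ha) _ (hπB hb)
  · exact Equiv.ext fun x => by simpa using DFunLike.congr_fun h (π.symm x)

theorem card_orderings_le_choose_mul {A B : Finset β} (hAB : Disjoint A B) :
    Fintype.card (β ≃ Fin (Fintype.card β)) ≤ (#A + #B).choose #A * #(precedeOrders A B) := by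
  set C := A ∪ B
  have hC : #C = #A + #B := card_union_of_disjoint hAB
  have cover : (univ : Finset (β ≃ Fin (Fintype.card β))) ⊆
      (C.powersetCard #A).biUnion fun T => precedeOrders T (C \ T) := by
    intro σ _
    obtain ⟨T, hTC, hTA, hT⟩ :=
      C.exists_subset_card_eq_forall_lt σ.injective (k := #A) (by omega)
    exact mem_biUnion.2 ⟨T, mem_powersetCard.2 ⟨hTC, hTA⟩, mem_precedeOrders.2 hT⟩
  calc Fintype.card (β ≃ Fin (Fintype.card β))
      ≤ #((C.powersetCard #A).biUnion fun T => precedeOrders T (C \ T)) := card_le_card cover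
    _ ≤ ∑ T ∈ C.powersetCard #A, #(precedeOrders T (C \ T)) := card_biUnion_le
    _ ≤ ∑ _T ∈ C.powersetCard #A, #(precedeOrders A B) := by
      refine sum_le_sum fun T hT => ?_
      obtain ⟨hTC, hTA⟩ := mem_powersetCard.1 hT
      exact card_precedeOrders_le disjoint_sdiff hAB hTA.symm
        (by rw [card_sdiff_of_subset hTC]; omega)
    _ = (#A + #B).choose #A * #(precedeOrders A B) := by
      rw [sum_const, card_powersetCard, hC, smul_eq_mul]

end Orderings

structure IsBollobasSystem {ι α : Type*} (s : Finset ι) (A B : ι → Finset α) : Prop where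
  disjoint : ∀ i ∈ s, Disjoint (A i) (B i)
  not_disjoint : ∀ i ∈ s, ∀ j ∈ s, i ≠ j → ¬Disjoint (A i) (B j)

namespace IsBollobasSystem

variable {ι α : Type*} {s : Finset ι} {A B : ι → Finset α}

theorem disjoint_precedeOrders [Fintype α] [DecidableEq α] (h : IsBollobasSystem s A B)
    {i j : ι} (hi : i ∈ s) (hj : j ∈ s) (hij : i ≠ j) :
    Disjoint (precedeOrders (A i) (B i)) (precedeOrders (A j) (B j)) := by
  refine disjoint_left.2 fun σ hσi hσj => ?_
  obtain ⟨x, hxi, hxj⟩ := not_disjoint_iff.1 (h.not_disjoint i hi j hj hij)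
  obtain ⟨y, hyj, hyi⟩ := not_disjoint_iff.1 (h.not_disjoint j hj i hi hij.symm)
  exact lt_asymm (mem_precedeOrders.1 hσi x hxi y hyi) (mem_precedeOrders.1 hσj y hyj x hxj)

theorem sum_inv_choose_le_one_of_fintype [Fintype α] [DecidableEq α]
    (h : IsBollobasSystem s A B) :
    ∑ i ∈ s, (((#(A i) + #(B i)).choose #(A i) : ℕ) : ℚ)⁻¹ ≤ 1 := by
  set N := Fintype.card (α ≃ Fin (Fintype.card α))
  have hN : (0 : ℚ) < N := by
    exact_mod_cast Fintype.card_pos_iff.2 ⟨Fintype.equivFin α⟩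
  have hterm : ∀ i ∈ s, (((#(A i) + #(B i)).choose #(A i) : ℕ) : ℚ)⁻¹ * N ≤
      #(precedeOrders (A i) (B i)) := fun i hi => by
    rw [inv_mul_le_iff₀ (by exact_mod_cast Nat.choose_pos (Nat.le_add_right _ _))]
    exact_mod_cast card_orderings_le_choose_mul (h.disjoint i hi)
  have hunion : ∑ i ∈ s, (#(precedeOrders (A i) (B i)) : ℚ) ≤ N := by
    rw [← Nat.cast_sum, ← card_biUnion fun i hi j hj hij => h.disjoint_precedeOrders hi hj hij]
    exact_mod_cast card_le_univ _
  refine le_of_mul_le_mul_right ?_ hN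
  rw [sum_mul, one_mul]
  exact (sum_le_sum hterm).trans hunion

theorem sum_inv_choose_le_one (h : IsBollobasSystem s A B) :
    ∑ i ∈ s, (((#(A i) + #(B i)).choose #(A i) : ℕ) : ℚ)⁻¹ ≤ 1 := by
  classical
  set U := s.biUnion fun i => A i ∪ B i
  set emb := Function.Embedding.subtype (· ∈ U)
  have hA : ∀ i ∈ s, ((A i).subtype (· ∈ U)).map emb = A i := fun i hi =>
    subtype_map_of_mem fun x hx => mem_biUnion.2 ⟨i, hi, mem_union_left _ hx⟩
  have hB : ∀ i ∈ s, ((B i).subtype (· ∈ U)).map emb = B i := fun i hi =>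
    subtype_map_of_mem fun x hx => mem_biUnion.2 ⟨i, hi, mem_union_right _ hx⟩
  have hU : IsBollobasSystem s (fun i => (A i).subtype (· ∈ U))
      fun i => (B i).subtype (· ∈ U) :=
    { disjoint := fun i hi => by
        rw [← disjoint_map emb, hA i hi, hB i hi]; exact h.disjoint i hi
      not_disjoint := fun i hi j hj hij => by
        rw [← disjoint_map emb, hA i hi, hB j hj]; exact h.not_disjoint i hi j hj hij }
  convert hU.sum_inv_choose_le_one_of_fintype using 6 with i hi <;>
    simp only [← card_map emb, hA i hi, hB i hi]

theorem card_le_choose (h : IsBollobasSystem s A B) {p q : ℕ}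
    (hA : ∀ i ∈ s, #(A i) = p) (hB : ∀ i ∈ s, #(B i) ≤ q) : #s ≤ (p + q).choose p := by
  have hpos : (0 : ℚ) < (p + q).choose p := by
    exact_mod_cast Nat.choose_pos (Nat.le_add_right _ _)
  have hterm : ∀ i ∈ s, (((p + q).choose p : ℕ) : ℚ)⁻¹ ≤
      (((#(A i) + #(B i)).choose #(A i) : ℕ) : ℚ)⁻¹ := fun i hi => by
    rw [hA i hi]
    gcongr
    · exact_mod_cast Nat.choose_pos (Nat.le_add_right _ _)
    · exact hB i hi
  have := (sum_le_sum hterm).trans h.sum_inv_choose_le_one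
  rw [sum_const, nsmul_eq_mul, mul_inv_le_iff₀ hpos, one_mul] at this
  exact_mod_cast this

end IsBollobasSystem

section Representatives

variable {α : Type*}

def IsRepresentative (q : ℕ) (F G : Finset (Finset α)) : Prop :=
  ∀ B : Finset α, #B = q → (∃ A ∈ F, Disjoint A B) → ∃ A ∈ G, Disjoint A B

theorem exists_isBollobasSystem_of_minimal_isRepresentative {q : ℕ} {F G : Finset (Finset α)}
    (hG : Minimal (IsRepresentative q F) G) :
    ∃ W : Finset α → Finset α, (∀ A ∈ G, #(W A) = q) ∧ IsBollobasSystem G id W := by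
  classical
  have hwit : ∀ A ∈ G, ∃ B : Finset α, #B = q ∧ Disjoint A B ∧
      ∀ A' ∈ G, A' ≠ A → ¬Disjoint A' B := fun A hA => by
    have hA : ¬IsRepresentative q F (G.erase A) := fun hrep =>
      notMem_erase A G (hG.2 hrep (erase_subset A G) hA)
    simp only [IsRepresentative, not_forall, not_exists, not_and, exists_prop] at hA
    obtain ⟨B, hBq, hBF, hBG⟩ := hA
    obtain ⟨A', hA'G, hA'B⟩ := hG.prop B hBq hBF
    have hA' : A' = A := by_contra fun hne => hBG A' (mem_erase.2 ⟨hne, hA'G⟩) hA'B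
    exact ⟨B, hBq, hA' ▸ hA'B, fun A' hA' hne => hBG A' (mem_erase.2 ⟨hne, hA'⟩)⟩
  choose! W hW using hwit
  exact ⟨W, fun A hA => (hW A hA).1, ⟨fun A hA => (hW A hA).2.1,
    fun A hA A' hA' hne => (hW A' hA').2.2 A hA hne⟩⟩

end Representatives

theorem exists_small_representative_general {α : Type*}
    (F : Finset (Finset α)) (p q : ℕ) (hF : ∀ A ∈ F, A.card = p) :
    ∃ Fhat : Finset (Finset α), Fhat ⊆ F ∧ Fhat.card ≤ (p + q).choose p ∧
      ∀ B : Finset α, B.card = q →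
        (∃ A ∈ F, Disjoint A B) → ∃ Ahat ∈ Fhat, Disjoint Ahat B := by
  obtain ⟨G, hGF, hG⟩ := exists_minimal_le_of_wellFoundedLT (IsRepresentative q F) F fun _ _ h => h
  obtain ⟨W, hW, hsys⟩ := exists_isBollobasSystem_of_minimal_isRepresentative hG
  exact ⟨G, hGF, hsys.card_le_choose (fun A hA => hF A (hGF hA)) fun A hA => (hW A hA).le,
    hG.prop⟩

/-- Bollobás's theorem on representatives: for every collection `F` of `p`-element sets
and every natural number `q`, there exists a `q`-representative subcollection
`F̂ ⊆ F` of size at most `C(p+q, p)`: for every `q`-element set `B`, if there exists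
`A ∈ F` with `A ∩ B = ∅` then there exists `Â ∈ F̂` with `Â ∩ B = ∅`. -/
theorem exists_small_representative {α : Type*} [DecidableEq α]
    (F : Finset (Finset α)) (p q : ℕ) (hF : ∀ A ∈ F, A.card = p) :
    ∃ Fhat : Finset (Finset α), Fhat ⊆ F ∧ Fhat.card ≤ (p + q).choose p ∧
      ∀ B : Finset α, B.card = q →
        (∃ A ∈ F, Disjoint A B) → ∃ Ahat ∈ Fhat, Disjoint Ahat B :=
  exists_small_representative_general F p q hF
end

section
/- Let F be a collection of p-sets and let T be a p-ary tree of height at most q whose nodes are labeled with elements of F or the special symbol λ, such that: nodes labeled with a set A at depth less than q have exactly p children whose edges are labeled bijectively with the elements of A; nodes labeled λ or at depth q are leaves; for each node v, letting E(v) be the set of edge labels on the path from v to the root, if v is labeled with A then A ∩ E(v) = ∅, and if v is labeled λ then no A ∈ F satisfies A ∩ E(v) = ∅. Then the collection of all set-labels of nodes of T is a q-representative for F. -/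
/-- Monien's tree construction yields a representative: let `F` be a collection of
`p`-sets and let a tree (with node type `ι`) be given, where each node `v` carries the
set `pathLabels v` of edge labels on the path from `v` to the root (so the root carries
`∅`, and a node at depth `i` carries `i` labels) and a label `lab v` which is either
`some A` for `A ∈ F` or `none` (the symbol `λ`).  Suppose:
* if `v` is labeled with `A`, then `A ∈ F`, `A` has `p` elements, and `A` is disjoint
  from `pathLabels v`;
* if `v` is labeled with `A` and its depth is less than `q`, it has, for each `a ∈ A`,
  a child reached by an edge labeled `a` (a node whose path-label set is
  `insert a (pathLabels v)`);
* if `v` is labeled `λ`, then no `A ∈ F` is disjoint from `pathLabels v`;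
* there is a root node with empty path-label set.
Then the collection of all set-labels of the tree's nodes is a `q`-representative for
`F`: for every `q`-set `B`, there is `A ∈ F` disjoint from `B` iff some node label is
disjoint from `B`. -/
theorem monien_tree_representative {α ι : Type*} [DecidableEq α]
    (F : Finset (Finset α)) (p q : ℕ) (hF : ∀ A ∈ F, A.card = p)
    (root : ι) (pathLabels : ι → Finset α) (lab : ι → Option (Finset α))
    (hroot : pathLabels root = ∅)
    (hlab : ∀ v A, lab v = some A → A ∈ F ∧ Disjoint A (pathLabels v))
    (hchild : ∀ v A, lab v = some A → (pathLabels v).card < q →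
      ∀ a ∈ A, ∃ w : ι, pathLabels w = insert a (pathLabels v))
    (hlambda : ∀ v, lab v = none → ∀ A ∈ F, ¬ Disjoint A (pathLabels v)) :
    ∀ B : Finset α, B.card = q →
      ((∃ A ∈ F, Disjoint A B) ↔ ∃ (v : ι) (A : Finset α), lab v = some A ∧ Disjoint A B) := by

  intro B hB
  constructor
  · rintro ⟨A, hA, hAB⟩
    suffices h : ∀ n v, q - (pathLabels v).card ≤ n → pathLabels v ⊆ B →
        ∃ w A', lab w = some A' ∧ Disjoint A' B by
      exact h q root (by simp [hroot]) (by simp [hroot])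
    intro n
    induction n with
    | zero =>
      intro v hn hsub
      have hcard : (pathLabels v).card ≤ B.card := Finset.card_le_card hsub
      have heq : pathLabels v = B := Finset.eq_of_subset_of_card_le hsub (by omega)
      cases hl : lab v with
      | none => exact absurd (hAB.mono_right hsub) (hlambda v hl A hA)
      | some A' =>
        obtain ⟨hA'F, hdisj⟩ := hlab v A' hl
        exact ⟨v, A', hl, heq ▸ hdisj⟩
    | succ n ih =>
      intro v hn hsub
      cases hl : lab v with
      | none => exact absurd (hAB.mono_right hsub) (hlambda v hl A hA)
      | some A' =>
        obtain ⟨hA'F, hdisj⟩ := hlab v A' hl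
        by_cases hd : Disjoint A' B
        · exact ⟨v, A', hl, hd⟩
        · have hlt : (pathLabels v).card < q := by
            by_contra h
            have heq : pathLabels v = B := Finset.eq_of_subset_of_card_le hsub (by omega)
            exact hd (heq ▸ hdisj)
          obtain ⟨a, haA, haB⟩ := Finset.not_disjoint_iff.mp hd
          obtain ⟨w, hw⟩ := hchild v A' hl hlt a haA
          apply ih w _ (by rw [hw]; exact Finset.insert_subset haB hsub)
          rw [hw, Finset.card_insert_of_notMem (fun h => Finset.disjoint_left.mp hdisj haA h)]
          omega
  · rintro ⟨v, A, hl, hAB⟩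
    exact ⟨A, (hlab v A hl).1, hAB⟩
end

section
/- ∑_{p=0}^{k-3} (p+1)^{k-2-p} ≤ (k-2)! for all integers k ≥ 6. -/
/-!
Induction on `n = k - 2`: raising the exponent of every term with `p < n` by one multiplies it
by `p + 1 ≤ n`, so the old terms of the sum for `n + 1` total at most `n · n!`, and the new
term `n + 1` is at most `n!` once `n ≥ 3`; together this gives `(n + 1)!`. The base case
`n = 4` reads `1 + 8 + 9 + 4 = 22 ≤ 24`.
-/

open Finset
open scoped Nat

lemma sum_range_pow_succ_sub_le (n : ℕ) :
    ∑ p ∈ range n, (p + 1) ^ (n + 1 - p) ≤ n * ∑ p ∈ range n, (p + 1) ^ (n - p) := by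
  rw [mul_sum]
  refine sum_le_sum fun p hp => ?_
  have hpn : p + 1 ≤ n := mem_range.mp hp
  rw [show n + 1 - p = n - p + 1 by omega, pow_succ, mul_comm]
  exact Nat.mul_le_mul_right _ hpn

lemma sum_range_pow_sub_le_factorial {n : ℕ} (hn : 4 ≤ n) :
    ∑ p ∈ range n, (p + 1) ^ (n - p) ≤ n ! := by
  induction n, hn using Nat.le_induction with
  | base => decide
  | succ n hn ih =>
    have hlast : n + 1 ≤ n ! := Nat.lt_factorial_self (by omega)
    calc ∑ p ∈ range (n + 1), (p + 1) ^ (n + 1 - p)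
        = ∑ p ∈ range n, (p + 1) ^ (n + 1 - p) + (n + 1) := by
          rw [sum_range_succ, Nat.add_sub_cancel_left, pow_one]
      _ ≤ n * n ! + n ! :=
          add_le_add ((sum_range_pow_succ_sub_le n).trans (Nat.mul_le_mul_left n ih)) hlast
      _ = (n + 1)! := by rw [Nat.factorial_succ]; ring

/-- `∑_{p=0}^{k-3} (p+1)^{k-2-p} ≤ (k-2)!` for all integers `k ≥ 6`. -/
theorem sum_pow_le_factorial (k : ℕ) (hk : 6 ≤ k) :
    ∑ p ∈ Finset.range (k - 2), (p + 1) ^ (k - 2 - p) ≤ Nat.factorial (k - 2) :=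
  sum_range_pow_sub_le_factorial (n := k - 2) (by omega)
end

section
/- If G is d-degenerate with n ≥ d+3 vertices, then the number of maximal cliques of G is at most (n−d)·3^{d/3}. -/
open Finset

theorem Nat.cube_le_three_pow (k : ℕ) : k ^ 3 ≤ 3 ^ k := by
  induction k with
  | zero => norm_num
  | succ k ih =>
    rcases lt_or_ge k 3 with hk | hk
    · interval_cases k <;> norm_num
    · calc (k + 1) ^ 3 ≤ 3 * k ^ 3 := by nlinarith [Nat.mul_le_mul hk hk]
        _ ≤ 3 * 3 ^ k := Nat.mul_le_mul_left 3 ih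
        _ = 3 ^ (k + 1) := by ring

theorem Real.monotone_three_rpow_div_three : Monotone fun k : ℕ ↦ (3 : ℝ) ^ ((k : ℝ) / 3) :=
  fun _ _ h ↦ Real.rpow_le_rpow_of_exponent_le (by norm_num) (by gcongr)

theorem Real.natCast_le_three_rpow_div_three (k : ℕ) : (k : ℝ) ≤ 3 ^ ((k : ℝ) / 3) := by
  have hcube : (3 ^ ((k : ℝ) / 3) : ℝ) ^ 3 = 3 ^ k := by
    rw [← Real.rpow_natCast, ← Real.rpow_mul (by norm_num)]
    norm_num
  refine le_of_pow_le_pow_left₀ (by norm_num) (by positivity) (n := 3) ?_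
  rw [hcube]
  exact_mod_cast Nat.cube_le_three_pow k

theorem Finset.card_le_sum_card_filter_mem {α : Type*} [DecidableEq α] {𝒞 : Finset (Finset α)}
    {T : Finset α} (h : ∀ C ∈ 𝒞, ∃ w ∈ T, w ∈ C) :
    #𝒞 ≤ ∑ w ∈ T, #{C ∈ 𝒞 | w ∈ C} := by
  refine (card_le_card fun C hC ↦ ?_).trans card_biUnion_le
  obtain ⟨w, hwT, hwC⟩ := h C hC
  exact mem_biUnion.2 ⟨w, hwT, mem_filter.2 ⟨hC, hwC⟩⟩

namespace SimpleGraph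

variable {V : Type*} (G : SimpleGraph V)

open Classical in
noncomputable def maximalCliquesIn (s : Finset V) : Finset (Finset V) :=
  {C ∈ s.powerset | Maximal (fun C : Finset V ↦ C ⊆ s ∧ G.IsClique (C : Set V)) C}

variable {G}

theorem mem_maximalCliquesIn {s C : Finset V} :
    C ∈ G.maximalCliquesIn s ↔ Maximal (fun C : Finset V ↦ C ⊆ s ∧ G.IsClique (C : Set V)) C := by
  classical
  simp only [maximalCliquesIn, mem_filter, mem_powerset, and_iff_right_iff_imp]
  exact fun h ↦ h.prop.1

variable {s C : Finset V} {v : V}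

theorem mem_of_mem_maximalCliquesIn_of_forall_adj (hC : C ∈ G.maximalCliquesIn s) (hv : v ∈ s)
    (hadj : ∀ u ∈ C, u ≠ v → G.Adj v u) : v ∈ C := by
  classical
  rw [mem_maximalCliquesIn] at hC
  have hvC : insert v C ⊆ s ∧ G.IsClique (insert v C : Finset V) := by
    refine ⟨insert_subset hv hC.prop.1, ?_⟩
    rw [coe_insert]
    exact hC.prop.2.insert fun u hu hne ↦ hadj u hu hne.symm
  rw [hC.eq_of_le hvC (subset_insert v C)]
  exact mem_insert_self v C

theorem exists_not_adj_of_mem_maximalCliquesIn (hC : C ∈ G.maximalCliquesIn s) (hv : v ∈ s) :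
    ∃ w ∈ C, ¬G.Adj v w := by
  by_contra! h
  exact G.irrefl (h v (mem_of_mem_maximalCliquesIn_of_forall_adj hC hv fun u hu _ ↦ h u hu))

variable [DecidableEq V]

theorem card_filter_mem_maximalCliquesIn_le [DecidableRel G.Adj] (hv : v ∈ s) :
    #{C ∈ G.maximalCliquesIn s | v ∈ C} ≤ #(G.maximalCliquesIn {u ∈ s | G.Adj v u}) := by
  refine card_le_card_of_injOn (·.erase v) (fun C hC ↦ ?_) (fun C₁ hC₁ C₂ hC₂ h ↦ ?_)
  · obtain ⟨hC, hvC⟩ := mem_filter.1 hC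
    rw [mem_maximalCliquesIn] at hC
    rw [mem_coe, mem_maximalCliquesIn, maximal_iff]
    refine ⟨⟨fun u hu ↦ ?_, hC.prop.2.subset (by simp)⟩, fun D ⟨hDN, hD⟩ hCD ↦ ?_⟩
    · obtain ⟨huv, huC⟩ := mem_erase.1 hu
      exact mem_filter.2 ⟨hC.prop.1 huC, hC.prop.2 hvC huC huv.symm⟩
    · have hvD : v ∉ D := fun h ↦ G.irrefl (mem_filter.1 (hDN h)).2
      have hvD' : insert v D ⊆ s ∧ G.IsClique (insert v D : Finset V) := by
        refine ⟨insert_subset hv (hDN.trans (filter_subset _ _)), ?_⟩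
        rw [coe_insert]
        exact hD.insert fun u hu _ ↦ (mem_filter.1 (hDN hu)).2
      rw [hC.eq_of_le hvD' (subset_insert_iff.2 hCD)]
      exact erase_insert hvD
  · rw [← insert_erase (mem_filter.1 hC₁).2, ← insert_erase (mem_filter.1 hC₂).2]
    exact congrArg (insert v) h

theorem filter_notMem_maximalCliquesIn_subset :
    {C ∈ G.maximalCliquesIn s | v ∉ C} ⊆ G.maximalCliquesIn (s.erase v) := by
  intro C hC
  obtain ⟨hC, hvC⟩ := mem_filter.1 hC
  rw [mem_maximalCliquesIn] at hC ⊢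
  exact hC.mono (fun D hD ↦ ⟨hD.1.trans (erase_subset v s), hD.2⟩)
    ⟨subset_erase.2 ⟨hC.prop.1, hvC⟩, hC.prop.2⟩

variable [DecidableRel G.Adj]

theorem card_maximalCliquesIn_le_three_rpow (s : Finset V) :
    (#(G.maximalCliquesIn s) : ℝ) ≤ 3 ^ ((#s : ℝ) / 3) := by
  induction s using Finset.strongInduction with
  | H s ih =>
  obtain rfl | hs := s.eq_empty_or_nonempty
  · have : #(G.maximalCliquesIn ∅) ≤ 1 :=
      (card_le_card fun C hC ↦ mem_powerset.2 (mem_maximalCliquesIn.1 hC).prop.1).trans (by simp)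
    simpa using this
  obtain ⟨v, hv, hvmax⟩ := s.exists_max_image (fun u ↦ #{w ∈ s | G.Adj u w}) hs
  set N := {w ∈ s | G.Adj v w}
  set T := {w ∈ s | ¬G.Adj v w}
  have hcover : ∀ C ∈ G.maximalCliquesIn s, ∃ w ∈ T, w ∈ C := fun C hC ↦
    let ⟨w, hwC, hvw⟩ := exists_not_adj_of_mem_maximalCliquesIn hC hv
    ⟨w, mem_filter.2 ⟨(mem_maximalCliquesIn.1 hC).prop.1 hwC, hvw⟩, hwC⟩
  have hthrough (w) (hw : w ∈ T) :
      (#{C ∈ G.maximalCliquesIn s | w ∈ C} : ℝ) ≤ 3 ^ ((#N : ℝ) / 3) := by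
    have hws := (mem_filter.1 hw).1
    calc (#{C ∈ G.maximalCliquesIn s | w ∈ C} : ℝ)
        ≤ #(G.maximalCliquesIn {u ∈ s | G.Adj w u}) := by
          exact_mod_cast card_filter_mem_maximalCliquesIn_le hws
      _ ≤ 3 ^ ((#{u ∈ s | G.Adj w u} : ℝ) / 3) := ih _ (filter_ssubset.2 ⟨w, hws, G.irrefl⟩)
      _ ≤ 3 ^ ((#N : ℝ) / 3) := Real.monotone_three_rpow_div_three (hvmax w hws)
  calc (#(G.maximalCliquesIn s) : ℝ)
      ≤ ∑ w ∈ T, (#{C ∈ G.maximalCliquesIn s | w ∈ C} : ℝ) := by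
        exact_mod_cast card_le_sum_card_filter_mem hcover
    _ ≤ #T * 3 ^ ((#N : ℝ) / 3) := by
        simpa only [nsmul_eq_mul] using sum_le_card_nsmul _ _ _ hthrough
    _ ≤ 3 ^ ((#T : ℝ) / 3) * 3 ^ ((#N : ℝ) / 3) := by
        gcongr
        exact Real.natCast_le_three_rpow_div_three _
    _ = 3 ^ ((#s : ℝ) / 3) := by
        have hsplit : (#N : ℝ) + #T = #s := by exact_mod_cast card_filter_add_card_filter_not _
        rw [← Real.rpow_add (by norm_num), ← add_div, add_comm, hsplit]

theorem card_maximalCliquesIn_le_of_degenerate [Fintype V] {d : ℕ} (hG : Degenerate G d)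
    {s : Finset V} (hs : d + 3 ≤ #s) :
    (#(G.maximalCliquesIn s) : ℝ) ≤ (#s - d) * 3 ^ ((d : ℝ) / 3) := by
  induction s using Finset.strongInduction with
  | H s ih =>
  obtain heq | hlt := hs.eq_or_lt
  · have hcard : (#s : ℝ) = d + 3 := by exact_mod_cast heq.symm
    calc (#(G.maximalCliquesIn s) : ℝ) ≤ 3 ^ ((#s : ℝ) / 3) :=
          card_maximalCliquesIn_le_three_rpow s
      _ = (#s - d) * 3 ^ ((d : ℝ) / 3) := by
        rw [hcard, add_div, div_self three_ne_zero, Real.rpow_add (by norm_num), Real.rpow_one]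
        ring
  obtain ⟨v, hv, hdeg⟩ := hG s (card_pos.1 (by omega))
  have hthrough : (#{C ∈ G.maximalCliquesIn s | v ∈ C} : ℝ) ≤ 3 ^ ((d : ℝ) / 3) :=
    calc (#{C ∈ G.maximalCliquesIn s | v ∈ C} : ℝ)
        ≤ #(G.maximalCliquesIn {u ∈ s | G.Adj v u}) := by
          exact_mod_cast card_filter_mem_maximalCliquesIn_le hv
      _ ≤ 3 ^ ((#{u ∈ s | G.Adj v u} : ℝ) / 3) := card_maximalCliquesIn_le_three_rpow _
      _ ≤ 3 ^ ((d : ℝ) / 3) := Real.monotone_three_rpow_div_three hdeg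
  have havoid : (#{C ∈ G.maximalCliquesIn s | v ∉ C} : ℝ) ≤ (#s - 1 - d) * 3 ^ ((d : ℝ) / 3) :=
    calc (#{C ∈ G.maximalCliquesIn s | v ∉ C} : ℝ) ≤ #(G.maximalCliquesIn (s.erase v)) := by
          exact_mod_cast card_le_card filter_notMem_maximalCliquesIn_subset
      _ ≤ (#(s.erase v) - d) * 3 ^ ((d : ℝ) / 3) :=
          ih _ (erase_ssubset hv) (by rw [card_erase_of_mem hv]; omega)
      _ = (#s - 1 - d) * 3 ^ ((d : ℝ) / 3) := by
          rw [card_erase_of_mem hv, Nat.cast_sub (by omega), Nat.cast_one]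
  rw [← card_filter_add_card_filter_not (v ∈ ·), Nat.cast_add]
  linarith

end SimpleGraph

/-- If `G` is `d`-degenerate with `n ≥ d + 3` vertices, then the number of maximal
cliques of `G` is at most `(n - d)·3^{d/3}`. -/
theorem card_maximal_cliques_le {V : Type*} [Fintype V] [DecidableEq V]
    (G : SimpleGraph V) [DecidableRel G.Adj] (d : ℕ) (hG : Degenerate G d)
    (hn : d + 3 ≤ Fintype.card V) :
    (Nat.card {C : Finset V // G.IsClique (C : Set V) ∧
        ∀ D : Finset V, G.IsClique (D : Set V) → C ⊆ D → C = D} : ℝ)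
      ≤ ((Fintype.card V : ℝ) - d) * (3 : ℝ) ^ ((d : ℝ) / 3) := by
  have hmem (C : Finset V) : C ∈ G.maximalCliquesIn univ ↔
      G.IsClique (C : Set V) ∧ ∀ D : Finset V, G.IsClique (D : Set V) → C ⊆ D → C = D := by
    simp [SimpleGraph.mem_maximalCliquesIn, maximal_iff]
  rw [← Nat.card_congr (Equiv.subtypeEquivRight hmem), Nat.card_eq_finsetCard, ← card_univ]
  exact G.card_maximalCliquesIn_le_of_degenerate hG (by rwa [card_univ])
end
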